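/- (Inconsistency merge lemma, Lemma 3 of the paper) Let T* join T' and T'' by edge (v, v_j), S = S' ∪ S''. If color i is left inconsistent or right inconsistent, then color i is inconsistent in (T*, S): some vertex of color i in T* has no nearest neighbor in S of color i. -/

import Mathlib

/-- Distance from a vertex to a set of vertices (∞ if the set is empty). -/
noncomputable def setDist {V : Type*} (G : SimpleGraph V) (u : V) (S : Set V) : ℕ∞ :=
  ⨅ x ∈ S, G.edist u x

/-- The set of nearest neighbors of `u` in `S`. -/
def nearest {V : Type*} (G : SimpleGraph V) (S : Set V) (u : V) : Set V :=
  {x ∈ S | G.edist u x = setDist G u S}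

/-- A vertex `u` is consistent in `(G, S)` if some nearest neighbor of `u` in `S`
has the same color as `u`. -/
def ConsistentAt {V : Type*} {k : ℕ} (G : SimpleGraph V) (c : V → Fin k) (S : Set V)
    (u : V) : Prop :=
  ∃ x ∈ nearest G S u, c x = c u

/-- `S` is a consistent subset of the vertex-colored graph `(G, c)`. -/
def Consistent {V : Type*} {k : ℕ} (G : SimpleGraph V) (c : V → Fin k) (S : Set V) : Prop :=
  ∀ u, ConsistentAt G c S u

/-- Color `i` is inconsistent in the part of the graph with vertex set `A`,
with respect to the candidate set `S` (distances taken in `G`, which agree with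
the subtree distances). -/
def ColorInconsistentOn {V : Type*} {k : ℕ} (G : SimpleGraph V) (c : V → Fin k)
    (i : Fin k) (A : Set V) (S : Set V) : Prop :=
  ∃ w ∈ A, c w = i ∧ ¬ ConsistentAt G c S w

/-- Color `i` occurs among the nearest neighbors of `u` in `S` (the set `L`). -/
def ColorInNearest {V : Type*} {k : ℕ} (G : SimpleGraph V) (c : V → Fin k)
    (i : Fin k) (S : Set V) (u : V) : Prop :=
  ∃ x ∈ nearest G S u, c x = i

open Classical in
/-- The value `r_i` of the tuple for the subtree on vertex set `A` rooted at `u`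
with candidate set `S`: the minimum of `dist(w,S) − dist(w,u)` over inconsistent
vertices `w` of color `i` if color `i` is inconsistent, and the maximum of
`dist(w,S) − dist(w,u)` over all vertices `w` of color `i` otherwise.
(Truncated subtraction in `ℕ∞` clamps negative values to `0`, the empty supremum
is `0`, and the value is `∞` when `S = ∅` in the inconsistent case.) -/
noncomputable def rval {V : Type*} {k : ℕ} (G : SimpleGraph V) (c : V → Fin k)
    (i : Fin k) (A : Set V) (u : V) (S : Set V) : ℕ∞ :=
  if ColorInconsistentOn G c i A S then
    ⨅ w ∈ {w ∈ A | c w = i ∧ ¬ ConsistentAt G c S w}, (setDist G w S - G.edist w u)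
  else
    ⨆ w ∈ {w ∈ A | c w = i}, (setDist G w S - G.edist w u)

/-- Color `i` is left consistent for the join of `(T', S')` (vertices `A`, root `v`)
and `(T'', S'')` (vertices `B`, root `v_j`). -/
def LeftConsistent {V : Type*} {k : ℕ} (G : SimpleGraph V) (c : V → Fin k)
    (i : Fin k) (A B : Set V) (v vj : V) (S' S'' : Set V) : Prop :=
  (¬ ColorInconsistentOn G c i A S' ∧
    (rval G c i A v S' ≤ setDist G vj S'' + 1 ∨ ColorInNearest G c i S'' vj)) ∨
  (ColorInconsistentOn G c i A S' ∧ ColorInNearest G c i S'' vj ∧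
    setDist G vj S'' + 1 ≤ rval G c i A v S')

/-- Color `i` is right consistent: the symmetric condition. -/
def RightConsistent {V : Type*} {k : ℕ} (G : SimpleGraph V) (c : V → Fin k)
    (i : Fin k) (A B : Set V) (v vj : V) (S' S'' : Set V) : Prop :=
  (¬ ColorInconsistentOn G c i B S'' ∧
    (rval G c i B vj S'' ≤ setDist G v S' + 1 ∨ ColorInNearest G c i S' v)) ∨
  (ColorInconsistentOn G c i B S'' ∧ ColorInNearest G c i S' v ∧
    setDist G v S' + 1 ≤ rval G c i B vj S'')

/-! A vertex `w` of `T'` sees `S''` only through the edge `{v, v_j}`: every `x ∈ S''` is at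
distance `dist(w, v) + 1 + dist(v_j, x)`, so the nearest neighbours of `w` in `S''` are those
of `v_j` and `dist(w, S'') = dist(w, v) + 1 + dist(v_j, S'')`. Comparing `r'_i` with `ℓ'' + 1`
compares `dist(w, S')` with exactly this quantity. Hence a failure of left consistency yields a vertex
`w` of colour `i` in `T'` whose nearest neighbours in `S' ∪ S''` all lie among its nearest
neighbours in `S'` (none of colour `i`), or among `L''` (none of colour `i`), or both.
Right consistency is the same statement with the two trees exchanged. -/

section NearestUnion

variable {V : Type*} {G : SimpleGraph V}

lemma setDist_le_edist {u x : V} {S : Set V} (hx : x ∈ S) : setDist G u S ≤ G.edist u x :=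
  iInf₂_le x hx

lemma setDist_union (u : V) (S T : Set V) :
    setDist G u (S ∪ T) = min (setDist G u S) (setDist G u T) := by
  rw [setDist, iInf_union]
  rfl

lemma nearest_union_subset (S T : Set V) (u : V) :
    nearest G (S ∪ T) u ⊆ nearest G S u ∪ nearest G T u := by
  rintro x ⟨hx | hx, hdist⟩
  · refine Or.inl ⟨hx, le_antisymm ?_ (setDist_le_edist hx)⟩
    exact hdist.trans_le ((setDist_union u S T).trans_le (min_le_left _ _))
  · refine Or.inr ⟨hx, le_antisymm ?_ (setDist_le_edist hx)⟩
    exact hdist.trans_le ((setDist_union u S T).trans_le (min_le_right _ _))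

lemma nearest_union_subset_left {S T : Set V} {u : V} (h : setDist G u S < setDist G u T) :
    nearest G (S ∪ T) u ⊆ nearest G S u := by
  rw [nearest, setDist_union, min_eq_left h.le]
  rintro x ⟨hx | hx, hdist⟩
  · exact ⟨hx, hdist⟩
  · exact absurd (hdist ▸ setDist_le_edist hx) h.not_ge

lemma nearest_union_subset_right {S T : Set V} {u : V} (h : setDist G u T < setDist G u S) :
    nearest G (S ∪ T) u ⊆ nearest G T u :=
  Set.union_comm S T ▸ nearest_union_subset_left h

lemma setDist_eq_add_of_edist_eq_add {w u : V} {T : Set V} {a : ℕ∞}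
    (h : ∀ x ∈ T, G.edist w x = a + G.edist u x) :
    setDist G w T = a + setDist G u T := by
  rw [setDist, setDist, ENat.add_iInf₂]
  exact iInf_congr fun x => iInf_congr (h x)

lemma nearest_eq_of_edist_eq_add {w u : V} {T : Set V} {a : ℕ∞} (ha : a ≠ ⊤)
    (h : ∀ x ∈ T, G.edist w x = a + G.edist u x) :
    nearest G T w = nearest G T u := by
  ext x
  simp only [nearest, Set.mem_ofPred_eq, setDist_eq_add_of_edist_eq_add h]
  exact and_congr_right fun hx => h x hx ▸ WithTop.add_left_inj ha

variable {k : ℕ} {c : V → Fin k}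

lemma not_consistentAt_union {S T : Set V} {u : V} (hS : ¬ ConsistentAt G c S u)
    (hT : ¬ ConsistentAt G c T u) : ¬ ConsistentAt G c (S ∪ T) u := by
  rintro ⟨x, hx, hcx⟩
  rcases nearest_union_subset S T u hx with hx | hx
  exacts [hS ⟨x, hx, hcx⟩, hT ⟨x, hx, hcx⟩]

lemma not_consistentAt_union_left {S T : Set V} {u : V} (h : setDist G u S < setDist G u T)
    (hS : ¬ ConsistentAt G c S u) : ¬ ConsistentAt G c (S ∪ T) u :=
  fun ⟨x, hx, hcx⟩ => hS ⟨x, nearest_union_subset_left h hx, hcx⟩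

lemma not_consistentAt_union_right {S T : Set V} {u : V} (h : setDist G u T < setDist G u S)
    (hT : ¬ ConsistentAt G c T u) : ¬ ConsistentAt G c (S ∪ T) u :=
  fun ⟨x, hx, hcx⟩ => hT ⟨x, nearest_union_subset_right h hx, hcx⟩

end NearestUnion

section Rval

variable {V : Type*} {k : ℕ} {G : SimpleGraph V} {c : V → Fin k} {i : Fin k} {A S : Set V}
  {u : V} {t : ℕ∞}

lemma exists_setDist_lt_of_rval_lt (hconn : G.Connected) (hinc : ColorInconsistentOn G c i A S)
    (h : rval G c i A u S < t) :
    ∃ w ∈ A, c w = i ∧ ¬ ConsistentAt G c S w ∧ setDist G w S < G.edist w u + t := by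
  rw [rval, if_pos hinc] at h
  simp only [iInf_lt_iff] at h
  obtain ⟨w, ⟨hw, hcw, hwinc⟩, hlt⟩ := h
  have hfin := SimpleGraph.edist_ne_top_iff_reachable.mpr (hconn.preconnected w u)
  exact ⟨w, hw, hcw, hwinc, (ENat.addLECancellable_of_ne_top hfin).lt_add_of_tsub_lt_left hlt⟩

lemma exists_lt_setDist_of_lt_rval (hconn : G.Connected)
    (hcons : ¬ ColorInconsistentOn G c i A S) (h : t < rval G c i A u S) :
    ∃ w ∈ A, c w = i ∧ G.edist w u + t < setDist G w S := by
  rw [rval, if_neg hcons] at h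
  simp only [lt_iSup_iff] at h
  obtain ⟨w, ⟨hw, hcw⟩, hlt⟩ := h
  have hfin := SimpleGraph.edist_ne_top_iff_reachable.mpr (hconn.preconnected w u)
  exact ⟨w, hw, hcw, (ENat.addLECancellable_of_ne_top hfin).lt_tsub_iff_left.mp hlt⟩

end Rval

lemma exists_not_consistentAt_union_of_not_leftConsistent {V : Type*} {k : ℕ}
    {G : SimpleGraph V} {c : V → Fin k} {i : Fin k} {A B S' S'' : Set V} {v vj : V}
    (hconn : G.Connected)
    (hlaw : ∀ w ∈ A, ∀ x ∈ S'', G.edist w x = G.edist w v + 1 + G.edist vj x)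
    (h : ¬ LeftConsistent G c i A B v vj S' S'') :
    ∃ w, c w = i ∧ ¬ ConsistentAt G c (S' ∪ S'') w := by
  have hroot : ∀ w ∈ A, nearest G S'' w = nearest G S'' vj := fun w hw =>
    nearest_eq_of_edist_eq_add (WithTop.add_ne_top.mpr
      ⟨SimpleGraph.edist_ne_top_iff_reachable.mpr (hconn.preconnected w v), ENat.one_ne_top⟩)
      (hlaw w hw)
  have hdist : ∀ w ∈ A, setDist G w S'' = G.edist w v + (setDist G vj S'' + 1) := fun w hw => by
    rw [setDist_eq_add_of_edist_eq_add (hlaw w hw)]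
    ring
  have hfar : ∀ w ∈ A, c w = i → ¬ ColorInNearest G c i S'' vj →
      ¬ ConsistentAt G c S'' w := by
    rintro w hw rfl hL ⟨x, hx, hcx⟩
    exact hL ⟨x, hroot w hw ▸ hx, hcx⟩
  simp only [LeftConsistent, not_or, not_and_or, not_not, not_le] at h
  by_cases hinc : ColorInconsistentOn G c i A S'
  · rcases h.2 with hcons | hL | hlt
    · exact absurd hinc hcons
    · obtain ⟨w, hw, hcw, hwinc⟩ := hinc
      exact ⟨w, hcw, not_consistentAt_union hwinc (hfar w hw hcw hL)⟩
    · obtain ⟨w, hw, hcw, hwinc, hlt⟩ := exists_setDist_lt_of_rval_lt hconn hinc hlt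
      exact ⟨w, hcw, not_consistentAt_union_left (hdist w hw ▸ hlt) hwinc⟩
  · obtain ⟨hlt, hL⟩ := h.1.resolve_left hinc
    obtain ⟨w, hw, hcw, hlt⟩ := exists_lt_setDist_of_lt_rval hconn hinc hlt
    exact ⟨w, hcw, not_consistentAt_union_right (hdist w hw ▸ hlt) (hfar w hw hcw hL)⟩

theorem inconsistency_merge_general {V : Type*} {k : ℕ}
    (G : SimpleGraph V) (c : V → Fin k) (i : Fin k) (A B : Set V) (v vj : V)
    (hconn : G.Connected)
    (hlaw : ∀ w ∈ A, ∀ x ∈ B, G.edist w x = G.edist w v + 1 + G.edist vj x)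
    (S' S'' : Set V) (hS'A : S' ⊆ A) (hS''B : S'' ⊆ B)
    (h : ¬ LeftConsistent G c i A B v vj S' S'' ∨
         ¬ RightConsistent G c i A B v vj S' S'') :
    ∃ w : V, c w = i ∧ ¬ ConsistentAt G c (S' ∪ S'') w := by
  rcases h with hleft | hright
  · exact exists_not_consistentAt_union_of_not_leftConsistent hconn
      (fun w hw x hx => hlaw w hw x (hS''B hx)) hleft
  · have hlaw' : ∀ x ∈ B, ∀ w ∈ S', G.edist x w = G.edist x vj + 1 + G.edist v w := by
      intro x hx w hw
      rw [SimpleGraph.edist_comm, hlaw w (hS'A hw) x hx, SimpleGraph.edist_comm (u := w),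
        SimpleGraph.edist_comm (u := vj)]
      ring
    rw [Set.union_comm]
    exact exists_not_consistentAt_union_of_not_leftConsistent (B := A) hconn hlaw' hright

/-- Lemma 3 of the paper: if color `i` is left inconsistent or right inconsistent,
then it is inconsistent in `(T*, S' ∪ S'')`. -/
theorem inconsistency_merge {V : Type*} {k : ℕ}
    (G : SimpleGraph V) (c : V → Fin k) (i : Fin k) (A B : Set V) (v vj : V)
    (hconn : G.Connected)
    (hv : v ∈ A) (hvj : vj ∈ B) (hdisj : Disjoint A B) (hcover : A ∪ B = Set.univ)
    (hlaw : ∀ w ∈ A, ∀ x ∈ B, G.edist w x = G.edist w v + 1 + G.edist vj x)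
    (S' S'' : Set V) (hS'A : S' ⊆ A) (hS''B : S'' ⊆ B)
    (h : ¬ LeftConsistent G c i A B v vj S' S'' ∨
         ¬ RightConsistent G c i A B v vj S' S'') :
    ∃ w : V, c w = i ∧ ¬ ConsistentAt G c (S' ∪ S'') w :=
  inconsistency_merge_general G c i A B v vj hconn hlaw S' S'' hS'A hS''B h
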